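/- (Charged particle in a slowly varying magnetic field: fast dynamics.) Fix constants B > 0 and λ ∈ ℝ, and on the domain {q₂ > 0} of ℝ⁴_{(p₂,q₂,p₃,q₃)} let H := (1/2)[ p₂² + p₃²(B²q₂² + λ²/q₂²) + 2λp₂p₃/q₂ + q₃²/q₂² ] and ω := √(B²q₂⁴ + λ²)/q₂². Let X_H^{(0)} be the Hamiltonian vector field in the fast variables (p₃,q₃): ṗ₃ = −∂H/∂q₃, q̇₃ = ∂H/∂p₃, with (p₂,q₂) frozen, and Υ := (1/ω)X_H^{(0)}. Then: (i) for each fixed (p₂,q₂,p₃,q₃) with q₂ > 0, the curve t ↦ ( P₃(t), Q₃(t) ) with P₃(t) := (p₃ + λp₂/(ω²q₂³))cos t − (q₃/(ωq₂²))sin t − λp₂/(ω²q₂³) and Q₃(t) := (ωq₂²p₃ + λp₂/(ωq₂))sin t + q₃ cos t is the integral curve of Υ starting at (p₃,q₃), and it is 2π-periodic; (ii) the function J := (1/(2ω))( q₃²/q₂² + (ωq₂p₃ + λp₂/(ωq₂²))² ) satisfies ∂J/∂p₃ = (1/ω)∂H/∂p₃ and ∂J/∂q₃ = (1/ω)∂H/∂q₃,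 and J is constant along this flow: J(p₂,q₂,P₃(t),Q₃(t)) = J(p₂,q₂,p₃,q₃) for all t. -/

import Mathlib

/-!
On a fast fibre (`p₂`, `q₂` fixed) the frequency `ω` is constant and `H = ω J + c(p₂, q₂)`,
so `d₀J = (1/ω) d₀H`. In the coordinates `u = q₃/q₂`, `v = ω q₂ p₃ + λ p₂/(ω q₂²)` one has
`J = (u² + v²)/(2ω)`, and the curve `(P₃, Q₃)` is the rotation of `(u, v)` by the angle `t`;
this gives the invariance of `J`, and differentiating it gives the flow equations.
-/

open Real

noncomputable section

/-- Phase space of the charged particle: `(p₂, q₂, p₃, q₃) ∈ ℝ⁴`, slow variables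
`(p₂,q₂)`, fast variables `(p₃,q₃)`. -/
abbrev CP := ℝ × ℝ × ℝ × ℝ

def Hcp (B lam : ℝ) (m : CP) : ℝ :=
  (1 / 2) * (m.1 ^ 2 + m.2.2.1 ^ 2 * (B ^ 2 * m.2.1 ^ 2 + lam ^ 2 / m.2.1 ^ 2) +
    2 * lam * m.1 * m.2.2.1 / m.2.1 + m.2.2.2 ^ 2 / m.2.1 ^ 2)

def ωcp (B lam : ℝ) (m : CP) : ℝ :=
  Real.sqrt (B ^ 2 * m.2.1 ^ 4 + lam ^ 2) / m.2.1 ^ 2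

def Jcp (B lam : ℝ) (m : CP) : ℝ :=
  (1 / (2 * ωcp B lam m)) * (m.2.2.2 ^ 2 / m.2.1 ^ 2 +
    (ωcp B lam m * m.2.1 * m.2.2.1 + lam * m.1 / (ωcp B lam m * m.2.1 ^ 2)) ^ 2)

def Pcur (B lam p₂ q₂ p₃ q₃ : ℝ) (t : ℝ) : ℝ :=
  (p₃ + lam * p₂ / ((ωcp B lam (p₂, q₂, p₃, q₃)) ^ 2 * q₂ ^ 3)) * Real.cos t -
    (q₃ / (ωcp B lam (p₂, q₂, p₃, q₃) * q₂ ^ 2)) * Real.sin t -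
    lam * p₂ / ((ωcp B lam (p₂, q₂, p₃, q₃)) ^ 2 * q₂ ^ 3)

def Qcur (B lam p₂ q₂ p₃ q₃ : ℝ) (t : ℝ) : ℝ :=
  (ωcp B lam (p₂, q₂, p₃, q₃) * q₂ ^ 2 * p₃ +
      lam * p₂ / (ωcp B lam (p₂, q₂, p₃, q₃) * q₂)) * Real.sin t + q₃ * Real.cos t

section LineDeriv

variable {E F : Type*} [NormedAddCommGroup E] [NormedSpace ℝ E] [NormedAddCommGroup F]
  [NormedSpace ℝ F]

theorem fderiv_apply_eq_of_hasDerivAt_comp {f : E → F} {γ : ℝ → E} {x : ℝ} {v : E} {d : F}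
    (hf : DifferentiableAt ℝ f (γ x)) (hγ : HasDerivAt γ v x)
    (hd : HasDerivAt (fun s => f (γ s)) d x) : fderiv ℝ f (γ x) v = d :=
  (hf.hasFDerivAt.comp_hasDerivAt x hγ).unique hd

theorem fderiv_apply_eq_const_mul_of_forall_line {f g : E → ℝ} {m v : E} {a b : ℝ}
    (hf : DifferentiableAt ℝ f m) (hg : DifferentiableAt ℝ g m)
    (h : ∀ s : ℝ, f (m + s • v) = a * g (m + s • v) + b) :
    fderiv ℝ f m v = a * fderiv ℝ g m v := by
  have hfg : HasLineDerivAt ℝ f (a * fderiv ℝ g m v) m v := by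
    have := ((hg.hasFDerivAt.hasLineDerivAt v).const_mul a).add_const b
    simpa only [HasLineDerivAt, ← h] using this
  exact (hf.hasFDerivAt.hasLineDerivAt v).unique hfg

end LineDeriv

theorem rotate_sq_add_sq (A C t : ℝ) :
    (A * sin t + C * cos t) ^ 2 + (A * cos t - C * sin t) ^ 2 = A ^ 2 + C ^ 2 := by
  linear_combination (A ^ 2 + C ^ 2) * sin_sq_add_cos_sq t

section ChargedParticle

variable {B lam : ℝ}

theorem ωcp_congr {m m' : CP} (h : m.2.1 = m'.2.1) : ωcp B lam m = ωcp B lam m' := by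
  rw [ωcp, ωcp, h]

theorem ωcp_pos (hB : B ≠ 0) {m : CP} (hq : m.2.1 ≠ 0) : 0 < ωcp B lam m := by
  unfold ωcp
  have : 0 < B ^ 2 * m.2.1 ^ 4 + lam ^ 2 := by positivity
  positivity

theorem ωcp_sq_mul_pow_four {m : CP} (hq : m.2.1 ≠ 0) :
    ωcp B lam m ^ 2 * m.2.1 ^ 4 = B ^ 2 * m.2.1 ^ 4 + lam ^ 2 := by
  rw [ωcp, div_pow, sq_sqrt (by positivity)]
  field_simp

theorem ωcp_sq_mul_sq {p₂ q₂ p₃ q₃ : ℝ} (hq : q₂ ≠ 0) :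
    ωcp B lam (p₂, q₂, p₃, q₃) ^ 2 * q₂ ^ 2 = B ^ 2 * q₂ ^ 2 + lam ^ 2 / q₂ ^ 2 := by
  have h := ωcp_sq_mul_pow_four (B := B) (lam := lam) (m := (p₂, q₂, p₃, q₃)) hq
  field_simp
  linear_combination h

theorem differentiableAt_Hcp {m : CP} (hq : m.2.1 ≠ 0) : DifferentiableAt ℝ (Hcp B lam) m := by
  have : m.2.1 ^ 2 ≠ 0 := by positivity
  unfold Hcp
  simp only [div_eq_mul_inv]
  fun_prop (disch := assumption)

theorem differentiableAt_ωcp (hB : B ≠ 0) {m : CP} (hq : m.2.1 ≠ 0) :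
    DifferentiableAt ℝ (ωcp B lam) m := by
  have : m.2.1 ^ 2 ≠ 0 := by positivity
  have hsqrt : DifferentiableAt ℝ (fun m : CP => √(B ^ 2 * m.2.1 ^ 4 + lam ^ 2)) m :=
    DifferentiableAt.sqrt (by fun_prop) (by positivity)
  unfold ωcp
  simp only [div_eq_mul_inv]
  fun_prop (disch := assumption)

theorem differentiableAt_Jcp (hB : B ≠ 0) {m : CP} (hq : m.2.1 ≠ 0) :
    DifferentiableAt ℝ (Jcp B lam) m := by
  have hω := differentiableAt_ωcp (lam := lam) hB hq
  have : ωcp B lam m ≠ 0 := (ωcp_pos hB hq).ne'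
  have : m.2.1 ^ 2 ≠ 0 := by positivity
  have : 2 * ωcp B lam m ≠ 0 := by positivity
  have : ωcp B lam m * m.2.1 ^ 2 ≠ 0 := by positivity
  unfold Jcp
  simp only [div_eq_mul_inv]
  fun_prop (disch := assumption)

theorem Hcp_eq_ωcp_mul_Jcp_add (hB : B ≠ 0) {m : CP} (hq : m.2.1 ≠ 0) :
    Hcp B lam m = ωcp B lam m * Jcp B lam m +
      m.1 ^ 2 * B ^ 2 * m.2.1 ^ 4 / (2 * (B ^ 2 * m.2.1 ^ 4 + lam ^ 2)) := by
  have hω : ωcp B lam m ≠ 0 := (ωcp_pos hB hq).ne'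
  have hω4 := ωcp_sq_mul_pow_four (B := B) (lam := lam) hq
  rw [Hcp, Jcp, ← hω4]
  field_simp
  linear_combination (m.1 ^ 2 - m.2.1 ^ 2 * m.2.2.1 ^ 2 * ωcp B lam m ^ 2) * hω4

theorem fderiv_Jcp_fast (hB : B ≠ 0) {m : CP} (hq : m.2.1 ≠ 0) (v : ℝ × ℝ) :
    fderiv ℝ (Jcp B lam) m (0, 0, v) = 1 / ωcp B lam m * fderiv ℝ (Hcp B lam) m (0, 0, v) := by
  have hfibre (s : ℝ) : Hcp B lam (m + s • (0, 0, v)) =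
      ωcp B lam m * Jcp B lam (m + s • (0, 0, v)) + m.1 ^ 2 * B ^ 2 * m.2.1 ^ 4 / (2 * (B ^ 2 * m.2.1 ^ 4 + lam ^ 2)) := by
    have hline : (m + s • ((0 : ℝ), (0 : ℝ), v)).2.1 = m.2.1 := by simp
    rw [Hcp_eq_ωcp_mul_Jcp_add hB (hline ▸ hq), ωcp_congr hline, hline]
    simp
  rw [fderiv_apply_eq_const_mul_of_forall_line (differentiableAt_Hcp hq)
      (differentiableAt_Jcp hB hq) hfibre, one_div, inv_mul_cancel_left₀ (ωcp_pos hB hq).ne']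

theorem hasDerivAt_Hcp_p₃ (p₂ q₂ q₃ x : ℝ) :
    HasDerivAt (fun x => Hcp B lam (p₂, q₂, x, q₃))
      (x * (B ^ 2 * q₂ ^ 2 + lam ^ 2 / q₂ ^ 2) + lam * p₂ / q₂) x := by
  have h := (((((hasDerivAt_id x).pow 2).mul_const (B ^ 2 * q₂ ^ 2 + lam ^ 2 / q₂ ^ 2)).const_add
    (p₂ ^ 2)).add (((hasDerivAt_id x).const_mul (2 * lam * p₂)).div_const q₂)).add_const
    (q₃ ^ 2 / q₂ ^ 2) |>.const_mul (1 / 2)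
  exact h.congr_deriv (by simp; ring)

theorem hasDerivAt_Hcp_q₃ (p₂ q₂ p₃ y : ℝ) :
    HasDerivAt (fun y => Hcp B lam (p₂, q₂, p₃, y)) (y / q₂ ^ 2) y := by
  have h := (((hasDerivAt_id y).pow 2).div_const (q₂ ^ 2)).const_add
    (p₂ ^ 2 + p₃ ^ 2 * (B ^ 2 * q₂ ^ 2 + lam ^ 2 / q₂ ^ 2) + 2 * lam * p₂ * p₃ / q₂) |>.const_mul
    (1 / 2)
  exact h.congr_deriv (by simp; ring)

theorem fderiv_Hcp_p₃ {p₂ q₂ p₃ q₃ : ℝ} (hq : q₂ ≠ 0) :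
    fderiv ℝ (Hcp B lam) (p₂, q₂, p₃, q₃) (0, 0, 1, 0) =
      p₃ * (B ^ 2 * q₂ ^ 2 + lam ^ 2 / q₂ ^ 2) + lam * p₂ / q₂ :=
  fderiv_apply_eq_of_hasDerivAt_comp (γ := fun x => (p₂, q₂, x, q₃)) (differentiableAt_Hcp hq)
    ((hasDerivAt_const _ _).prodMk ((hasDerivAt_const _ _).prodMk
      ((hasDerivAt_id _).prodMk (hasDerivAt_const _ _)))) (hasDerivAt_Hcp_p₃ p₂ q₂ q₃ p₃)

theorem fderiv_Hcp_q₃ {p₂ q₂ p₃ q₃ : ℝ} (hq : q₂ ≠ 0) :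
    fderiv ℝ (Hcp B lam) (p₂, q₂, p₃, q₃) (0, 0, 0, 1) = q₃ / q₂ ^ 2 :=
  fderiv_apply_eq_of_hasDerivAt_comp (γ := fun y => (p₂, q₂, p₃, y)) (differentiableAt_Hcp hq)
    ((hasDerivAt_const _ _).prodMk ((hasDerivAt_const _ _).prodMk
      ((hasDerivAt_const _ _).prodMk (hasDerivAt_id _)))) (hasDerivAt_Hcp_q₃ p₂ q₂ p₃ q₃)

section Flow

variable {p₂ q₂ p₃ q₃ : ℝ}

theorem Pcur_periodic : Function.Periodic (Pcur B lam p₂ q₂ p₃ q₃) (2 * π) := by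
  intro t
  simp [Pcur, cos_add_two_pi, sin_add_two_pi]

theorem Qcur_periodic : Function.Periodic (Qcur B lam p₂ q₂ p₃ q₃) (2 * π) := by
  intro t
  simp [Qcur, cos_add_two_pi, sin_add_two_pi]

theorem hasDerivAt_Pcur (hB : B ≠ 0) (hq : q₂ ≠ 0) (t : ℝ) :
    HasDerivAt (Pcur B lam p₂ q₂ p₃ q₃)
      (-(1 / ωcp B lam (p₂, q₂, p₃, q₃)) * (Qcur B lam p₂ q₂ p₃ q₃ t / q₂ ^ 2)) t := by
  have hω : ωcp B lam (p₂, q₂, p₃, q₃) ≠ 0 := (ωcp_pos hB hq).ne'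
  refine (((hasDerivAt_cos t).const_mul _).sub ((hasDerivAt_sin t).const_mul _)).sub_const
    _ |>.congr_deriv ?_
  unfold Qcur
  field_simp
  ring

theorem hasDerivAt_Qcur (hB : B ≠ 0) (hq : q₂ ≠ 0) (t : ℝ) :
    HasDerivAt (Qcur B lam p₂ q₂ p₃ q₃)
      (1 / ωcp B lam (p₂, q₂, p₃, q₃) *
        (Pcur B lam p₂ q₂ p₃ q₃ t * (B ^ 2 * q₂ ^ 2 + lam ^ 2 / q₂ ^ 2) + lam * p₂ / q₂)) t := by
  have hω : ωcp B lam (p₂, q₂, p₃, q₃) ≠ 0 := (ωcp_pos hB hq).ne'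
  refine ((hasDerivAt_sin t).const_mul _).add ((hasDerivAt_cos t).const_mul _) |>.congr_deriv ?_
  rw [← ωcp_sq_mul_sq hq]
  unfold Pcur
  field_simp
  ring

theorem Jcp_Pcur_Qcur (hB : B ≠ 0) (hq : q₂ ≠ 0) (t : ℝ) :
    Jcp B lam (p₂, q₂, Pcur B lam p₂ q₂ p₃ q₃ t, Qcur B lam p₂ q₂ p₃ q₃ t) =
      Jcp B lam (p₂, q₂, p₃, q₃) := by
  have hω : ωcp B lam (p₂, q₂, p₃, q₃) ≠ 0 := (ωcp_pos hB hq).ne'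
  have hflow : ωcp B lam (p₂, q₂, Pcur B lam p₂ q₂ p₃ q₃ t, Qcur B lam p₂ q₂ p₃ q₃ t) =
      ωcp B lam (p₂, q₂, p₃, q₃) := rfl
  rw [Jcp, Jcp, hflow]
  unfold Pcur Qcur
  set ω := ωcp B lam (p₂, q₂, p₃, q₃)
  set V := ω * q₂ * p₃ + lam * p₂ / (ω * q₂ ^ 2)
  set U := q₃ / q₂
  congr 1
  calc _ = (V * sin t + U * cos t) ^ 2 + (V * cos t - U * sin t) ^ 2 := by
        simp only [V, U]
        field_simp
        ring
    _ = V ^ 2 + U ^ 2 := rotate_sq_add_sq V U t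
    _ = _ := by simp only [U, div_pow]; ring

end Flow

end ChargedParticle

/-- Charged particle, fast dynamics: (i) the explicit curve
`(P₃(t), Q₃(t))` is the `2π`-periodic integral curve of `Υ = (1/ω)X_H^{(0)}`
starting at `(p₃,q₃)`; (ii) `J` satisfies `d₀J = (1/ω)d₀H` on `{q₂ > 0}` and is
constant along this flow. -/
theorem stmt18 (B lam : ℝ) (hB : 0 < B) :
    (∀ p₂ q₂ p₃ q₃ : ℝ, 0 < q₂ →
      (Pcur B lam p₂ q₂ p₃ q₃ 0 = p₃ ∧ Qcur B lam p₂ q₂ p₃ q₃ 0 = q₃) ∧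
      (∀ t : ℝ,
        HasDerivAt (Pcur B lam p₂ q₂ p₃ q₃)
          (-(1 / ωcp B lam (p₂, q₂, Pcur B lam p₂ q₂ p₃ q₃ t, Qcur B lam p₂ q₂ p₃ q₃ t)) *
            fderiv ℝ (Hcp B lam)
              (p₂, q₂, Pcur B lam p₂ q₂ p₃ q₃ t, Qcur B lam p₂ q₂ p₃ q₃ t) (0, 0, 0, 1)) t ∧
        HasDerivAt (Qcur B lam p₂ q₂ p₃ q₃)
          ((1 / ωcp B lam (p₂, q₂, Pcur B lam p₂ q₂ p₃ q₃ t, Qcur B lam p₂ q₂ p₃ q₃ t)) *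
            fderiv ℝ (Hcp B lam)
              (p₂, q₂, Pcur B lam p₂ q₂ p₃ q₃ t, Qcur B lam p₂ q₂ p₃ q₃ t) (0, 0, 1, 0)) t) ∧
      (∀ t : ℝ, Pcur B lam p₂ q₂ p₃ q₃ (t + 2 * π) = Pcur B lam p₂ q₂ p₃ q₃ t ∧
        Qcur B lam p₂ q₂ p₃ q₃ (t + 2 * π) = Qcur B lam p₂ q₂ p₃ q₃ t)) ∧
    (∀ m : CP, 0 < m.2.1 →
      fderiv ℝ (Jcp B lam) m (0, 0, 1, 0) =
        (1 / ωcp B lam m) * fderiv ℝ (Hcp B lam) m (0, 0, 1, 0) ∧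
      fderiv ℝ (Jcp B lam) m (0, 0, 0, 1) =
        (1 / ωcp B lam m) * fderiv ℝ (Hcp B lam) m (0, 0, 0, 1)) ∧
    (∀ p₂ q₂ p₃ q₃ : ℝ, 0 < q₂ → ∀ t : ℝ,
      Jcp B lam (p₂, q₂, Pcur B lam p₂ q₂ p₃ q₃ t, Qcur B lam p₂ q₂ p₃ q₃ t) =
        Jcp B lam (p₂, q₂, p₃, q₃)) := by
  refine ⟨fun p₂ q₂ p₃ q₃ hq => ⟨⟨by simp [Pcur], by simp [Qcur]⟩, fun t => ⟨?_, ?_⟩,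
      fun t => ⟨Pcur_periodic t, Qcur_periodic t⟩⟩,
    fun m hq => ⟨fderiv_Jcp_fast hB.ne' hq.ne' _, fderiv_Jcp_fast hB.ne' hq.ne' _⟩,
    fun p₂ q₂ p₃ q₃ hq t => Jcp_Pcur_Qcur hB.ne' hq.ne' t⟩
  · rw [fderiv_Hcp_q₃ hq.ne']
    exact hasDerivAt_Pcur hB.ne' hq.ne' t
  · rw [fderiv_Hcp_p₃ hq.ne']
    exact hasDerivAt_Qcur hB.ne' hq.ne' t
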